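/- Let γ ∈ Π(μ,ν) for probability measures μ, ν on ℝⁿ with finite second moments, and let γ_ℓ denote the block approximation of γ at scale ℓ. Then the transport cost converges: ∫|x−y|² dγ_ℓ(x,y) → ∫|x−y|² dγ(x,y) as ℓ → 0⁺. -/

import Mathlib

open MeasureTheory ENNReal Filter Topology
noncomputable section

abbrev En (n : ℕ) : Type := EuclideanSpace ℝ (Fin n)

def IsCoupling {n : ℕ} (μ ν : Measure (En n)) (γ : Measure (En n × En n)) : Prop :=
  γ.map Prod.fst = μ ∧ γ.map Prod.snd = ν

def tCost {n : ℕ} (γ : Measure (En n × En n)) : ℝ≥0∞ :=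
  ∫⁻ p, (‖p.1 - p.2‖₊ : ℝ≥0∞) ^ 2 ∂γ

def W2sq {n : ℕ} (μ ν : Measure (En n)) : ℝ≥0∞ :=
  ⨅ (γ : Measure (En n × En n)) (_ : IsCoupling μ ν γ), tCost γ

def M2 {n : ℕ} (μ : Measure (En n)) : ℝ≥0∞ := ∫⁻ x, (‖x‖₊ : ℝ≥0∞) ^ 2 ∂μ

def dens {X : Type*} [MeasureSpace X] (μ : Measure X) (x : X) : ℝ :=
  (μ.rnDeriv volume x).toReal

def entIntegrand {X : Type*} [MeasureSpace X] (μ : Measure X) (x : X) : ℝ :=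
  dens μ x * Real.log (dens μ x)

def Hneg {X : Type*} [MeasureSpace X] (μ : Measure X) : ℝ≥0∞ :=
  ∫⁻ x, ENNReal.ofReal (-(entIntegrand μ x))

def Hpos {X : Type*} [MeasureSpace X] (μ : Measure X) : ℝ≥0∞ :=
  ∫⁻ x, ENNReal.ofReal (entIntegrand μ x)

open scoped Classical in
def entE {X : Type*} [MeasureSpace X] (μ : Measure X) : EReal :=
  if μ ≪ (volume : Measure X) then
    (if Hpos μ = ∞ then (⊤ : EReal) else ((Hpos μ).toReal : EReal) - ((Hneg μ : ℝ≥0∞) : EReal))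
  else ⊤

def W2epsE {n : ℕ} (ε : ℝ) (μ ν : Measure (En n)) : EReal :=
  ⨅ (γ : Measure (En n × En n)) (_ : IsCoupling μ ν γ),
    ((tCost γ : ℝ≥0∞) : EReal) + (ε : EReal) * entE γ

def cube {n : ℕ} (j : Fin n → ℤ) (ℓ : ℝ) : Set (En n) :=
  {x | ∀ i, (j i : ℝ) * ℓ ≤ x i ∧ x i < ((j i : ℝ) + 1) * ℓ}

def cellNormalize {n : ℕ} (μ : Measure (En n)) (S : Set (En n)) : Measure (En n) :=
  (μ S)⁻¹ • μ.restrict S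

def blockApprox {n : ℕ} (μ ν : Measure (En n)) (γ : Measure (En n × En n)) (ℓ : ℝ) :
    Measure (En n × En n) :=
  Measure.sum (fun jk : (Fin n → ℤ) × (Fin n → ℤ) =>
    γ (cube jk.1 ℓ ×ˢ cube jk.2 ℓ) •
      ((cellNormalize μ (cube jk.1 ℓ)).prod (cellNormalize ν (cube jk.2 ℓ))))

/-! On a cell `Q_j × Q_k` of the grid of side `ℓ`, the block approximation `γ_ℓ` is a product
probability measure carrying the mass `γ (Q_j × Q_k)`, and any two points `(x, y)`, `(x', y')` of
the cell satisfy `‖x - y‖ ≤ ‖x' - y'‖ + 2 √n ℓ`. Comparing cell by cell, the cost of each of `γ`,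
`γ_ℓ` is at most `∫ (‖x - y‖ + 2 √n ℓ)²` against the other, so by Minkowski's inequality the
square roots of the two costs differ by at most `2 √n ℓ`. -/

open Set Function

section BlockMeasure

variable {α ι : Type*} [MeasurableSpace α] [Countable ι]

theorem setLIntegral_mul_le_mul_setLIntegral {ρ σ : Measure α} {S : Set α} (hS : MeasurableSet S)
    {f g : α → ℝ≥0∞} (hg : Measurable g) (hfg : ∀ x ∈ S, ∀ y ∈ S, f x ≤ g y) :
    (∫⁻ x in S, f x ∂ρ) * σ S ≤ ρ S * ∫⁻ y in S, g y ∂σ := by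
  have hf : ∀ y ∈ S, ∫⁻ x in S, f x ∂ρ ≤ ρ S * g y := fun y hy => by
    simpa only [setLIntegral_const, mul_comm] using
      setLIntegral_mono' hS fun x hx => hfg x hx y hy
  calc (∫⁻ x in S, f x ∂ρ) * σ S = ∫⁻ _ in S, ∫⁻ x in S, f x ∂ρ ∂σ := (setLIntegral_const _ _).symm
    _ ≤ ∫⁻ y in S, ρ S * g y ∂σ := setLIntegral_mono' hS hf
    _ = ρ S * ∫⁻ y in S, g y ∂σ := lintegral_const_mul _ hg

variable {S : ι → Set α} {γ : Measure α} {π : ι → Measure α} {f g : α → ℝ≥0∞}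

theorem lintegral_sum_smul_le (hS : ∀ i, MeasurableSet (S i)) (hdisj : Pairwise (Disjoint on S))
    (hπ : ∀ i, γ (S i) ≠ 0 → π i (S i) = 1 ∧ ∀ᵐ x ∂π i, x ∈ S i) (hg : Measurable g)
    (hfg : ∀ i, ∀ x ∈ S i, ∀ y ∈ S i, f x ≤ g y) :
    ∫⁻ x, f x ∂Measure.sum (fun i => γ (S i) • π i) ≤ ∫⁻ x, g x ∂γ := by
  rw [lintegral_sum_measure]
  calc ∑' i, ∫⁻ x, f x ∂(γ (S i) • π i) ≤ ∑' i, ∫⁻ x in S i, g x ∂γ := by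
        refine ENNReal.tsum_le_tsum fun i => ?_
        rw [lintegral_smul_measure, smul_eq_mul]
        rcases eq_or_ne (γ (S i)) 0 with h0 | h0
        · simp [h0]
        obtain ⟨hone, hae⟩ := hπ i h0
        have := setLIntegral_mul_le_mul_setLIntegral (ρ := π i) (σ := γ) (hS i) hg (hfg i)
        rwa [Measure.restrict_eq_self_of_ae_mem hae, hone, one_mul, mul_comm] at this
    _ = ∫⁻ x in ⋃ i, S i, g x ∂γ := (lintegral_iUnion hS hdisj g).symm
    _ ≤ ∫⁻ x, g x ∂γ := setLIntegral_le_lintegral _ _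

theorem lintegral_le_lintegral_sum_smul (hS : ∀ i, MeasurableSet (S i))
    (hdisj : Pairwise (Disjoint on S)) (hcover : ⋃ i, S i = univ)
    (hπ : ∀ i, γ (S i) ≠ 0 → π i (S i) = 1) (hg : Measurable g)
    (hfg : ∀ i, ∀ x ∈ S i, ∀ y ∈ S i, f x ≤ g y) :
    ∫⁻ x, f x ∂γ ≤ ∫⁻ x, g x ∂Measure.sum (fun i => γ (S i) • π i) := by
  rw [lintegral_sum_measure, ← setLIntegral_univ, ← hcover, lintegral_iUnion hS hdisj]
  refine ENNReal.tsum_le_tsum fun i => ?_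
  rw [lintegral_smul_measure, smul_eq_mul]
  rcases eq_or_ne (γ (S i)) 0 with h0 | h0
  · simp [setLIntegral_measure_zero _ _ h0]
  calc ∫⁻ x in S i, f x ∂γ = (∫⁻ x in S i, f x ∂γ) * π i (S i) := by rw [hπ i h0, mul_one]
    _ ≤ γ (S i) * ∫⁻ y in S i, g y ∂π i := setLIntegral_mul_le_mul_setLIntegral (hS i) hg (hfg i)
    _ ≤ γ (S i) * ∫⁻ y, g y ∂π i := mul_le_mul_right (setLIntegral_le_lintegral _ _) _

end BlockMeasure

theorem lintegral_add_const_sq_rpow_le {α : Type*} [MeasurableSpace α] (σ : Measure α)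
    {f : α → ℝ≥0∞} (hf : AEMeasurable f σ) (c : ℝ≥0∞) :
    (∫⁻ x, (f x + c) ^ 2 ∂σ) ^ (2⁻¹ : ℝ) ≤
      (∫⁻ x, f x ^ 2 ∂σ) ^ (2⁻¹ : ℝ) + c * σ univ ^ (2⁻¹ : ℝ) := by
  have h := ENNReal.lintegral_Lp_add_le hf aemeasurable_const (μ := σ) (g := fun _ => c)
    one_le_two
  simp only [Pi.add_apply, ENNReal.rpow_two, lintegral_const, one_div] at h
  rwa [ENNReal.mul_rpow_of_nonneg _ _ (by norm_num), ← ENNReal.rpow_two,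
    ENNReal.rpow_rpow_inv two_ne_zero] at h

theorem ENNReal.tendsto_of_le_add_of_le_add {β : Type*} {l : Filter β} {a c : β → ℝ≥0∞}
    {b : ℝ≥0∞} (hc : Tendsto c l (𝓝 0)) (hab : ∀ᶠ x in l, a x ≤ b + c x)
    (hba : ∀ᶠ x in l, b ≤ a x + c x) : Tendsto a l (𝓝 b) := by
  have hlow : Tendsto (fun x => b - c x) l (𝓝 b) := by
    simpa using ENNReal.Tendsto.sub tendsto_const_nhds hc (Or.inr zero_ne_top)
  have hup : Tendsto (fun x => b + c x) l (𝓝 b) := by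
    simpa using tendsto_const_nhds.add hc
  exact tendsto_of_tendsto_of_tendsto_of_le_of_le' hlow hup
    (hba.mono fun x h => tsub_le_iff_right.2 h) hab

theorem EuclideanSpace.norm_le_sqrt_card_mul {ι : Type*} [Fintype ι] {x : EuclideanSpace ℝ ι}
    {r : ℝ} (hr : 0 ≤ r) (hx : ∀ i, |x i| ≤ r) : ‖x‖ ≤ √(Fintype.card ι) * r := by
  rw [EuclideanSpace.norm_eq, ← Real.sqrt_sq hr, ← Real.sqrt_mul (Nat.cast_nonneg _)]
  refine Real.sqrt_le_sqrt ?_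
  calc ∑ i, ‖x i‖ ^ 2 ≤ ∑ _ : ι, r ^ 2 := Finset.sum_le_sum fun i _ => by
        rw [Real.norm_eq_abs]; exact pow_le_pow_left₀ (abs_nonneg _) (hx i) 2
    _ = Fintype.card ι * r ^ 2 := by simp

section Cubes

variable {n : ℕ} {ℓ : ℝ}

theorem mem_cube_iff (hℓ : 0 < ℓ) (j : Fin n → ℤ) (x : En n) :
    x ∈ cube j ℓ ↔ ∀ i, ⌊x i / ℓ⌋ = j i := by
  refine forall_congr' fun i => ?_
  rw [Int.floor_eq_iff, le_div_iff₀ hℓ, div_lt_iff₀ hℓ]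

theorem measurableSet_cube (j : Fin n → ℤ) (ℓ : ℝ) : MeasurableSet (cube j ℓ) := by
  have hcoord (i : Fin n) : Measurable fun x : En n => x i :=
    (measurable_pi_apply i).comp (WithLp.measurable_ofLp 2 _)
  have : cube j ℓ = ⋂ i, (fun x : En n => x i) ⁻¹' Ico ((j i : ℝ) * ℓ) (((j i : ℝ) + 1) * ℓ) := by
    ext x; simp [cube]
  rw [this]
  exact MeasurableSet.iInter fun i => hcoord i measurableSet_Ico

theorem pairwise_disjoint_cube (hℓ : 0 < ℓ) :
    Pairwise (Disjoint on fun j : Fin n → ℤ => cube j ℓ) :=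
  fun j j' hne => disjoint_left.2 fun x hx hx' => hne <| funext fun i => by
    rw [← (mem_cube_iff hℓ j x).1 hx i, ← (mem_cube_iff hℓ j' x).1 hx' i]

theorem iUnion_cube (hℓ : 0 < ℓ) : ⋃ j : Fin n → ℤ, cube j ℓ = univ :=
  eq_univ_of_forall fun x => mem_iUnion.2 ⟨fun i => ⌊x i / ℓ⌋, (mem_cube_iff hℓ _ x).2 fun _ => rfl⟩

theorem norm_sub_le_of_mem_cube (hℓ : 0 ≤ ℓ) {j : Fin n → ℤ} {x y : En n}
    (hx : x ∈ cube j ℓ) (hy : y ∈ cube j ℓ) : ‖x - y‖ ≤ √n * ℓ := by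
  have hcoord (i : Fin n) : |(x - y) i| ≤ ℓ := by
    have := hx i; have := hy i
    rw [WithLp.ofLp_sub, Pi.sub_apply, abs_sub_le_iff]
    constructor <;> linarith
  simpa using EuclideanSpace.norm_le_sqrt_card_mul hℓ hcoord

theorem norm_sub_le_of_mem_cube_prod (hℓ : 0 ≤ ℓ) {j k : Fin n → ℤ} {p q : En n × En n}
    (hp : p ∈ cube j ℓ ×ˢ cube k ℓ) (hq : q ∈ cube j ℓ ×ˢ cube k ℓ) :
    ‖p.1 - p.2‖ ≤ ‖q.1 - q.2‖ + 2 * (√n * ℓ) := by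
  have h₁ := norm_sub_le_of_mem_cube hℓ hp.1 hq.1
  have h₂ := norm_sub_le_of_mem_cube hℓ hq.2 hp.2
  calc ‖p.1 - p.2‖ = ‖(p.1 - q.1) + (q.1 - q.2) + (q.2 - p.2)‖ := by congr 1; abel
    _ ≤ ‖p.1 - q.1‖ + ‖q.1 - q.2‖ + ‖q.2 - p.2‖ := norm_add₃_le
    _ ≤ ‖q.1 - q.2‖ + 2 * (√n * ℓ) := by linarith

end Cubes

section Coupling

variable {n : ℕ} {μ ν : Measure (En n)} {γ : Measure (En n × En n)}

theorem IsCoupling.measure_prod_le_left (hγ : IsCoupling μ ν γ) {A : Set (En n)}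
    (hA : MeasurableSet A) (B : Set (En n)) : γ (A ×ˢ B) ≤ μ A := by
  rw [← hγ.1, Measure.map_apply measurable_fst hA]
  exact measure_mono fun p hp => hp.1

theorem IsCoupling.measure_prod_le_right (hγ : IsCoupling μ ν γ) (A : Set (En n)) {B : Set (En n)}
    (hB : MeasurableSet B) : γ (A ×ˢ B) ≤ ν B := by
  rw [← hγ.2, Measure.map_apply measurable_snd hB]
  exact measure_mono fun p hp => hp.2

theorem IsCoupling.isProbabilityMeasure [IsProbabilityMeasure μ] (hγ : IsCoupling μ ν γ) :
    IsProbabilityMeasure γ :=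
  ⟨by rw [← measure_univ (μ := μ), ← hγ.1, Measure.map_apply measurable_fst MeasurableSet.univ,
    preimage_univ]⟩

end Coupling

section CellNormalize

variable {n : ℕ} (μ ν : Measure (En n)) {A B : Set (En n)}

instance [SFinite μ] (A : Set (En n)) : SFinite (cellNormalize μ A) := by
  unfold cellNormalize; infer_instance

theorem cellNormalize_apply_self [IsFiniteMeasure μ] (hμA : μ A ≠ 0) :
    cellNormalize μ A A = 1 := by
  rw [cellNormalize, Measure.smul_apply, Measure.restrict_apply_self, smul_eq_mul,
    ENNReal.inv_mul_cancel hμA (measure_ne_top μ A)]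

theorem ae_mem_cellNormalize (hA : MeasurableSet A) : ∀ᵐ x ∂cellNormalize μ A, x ∈ A :=
  Measure.ae_smul_measure (ae_restrict_mem hA) _

theorem ae_mem_cellNormalize_prod [SFinite ν] (hA : MeasurableSet A) (hB : MeasurableSet B) :
    ∀ᵐ p ∂(cellNormalize μ A).prod (cellNormalize ν B), p ∈ A ×ˢ B :=
  (Measure.quasiMeasurePreserving_fst.ae (ae_mem_cellNormalize μ hA)).and
    (Measure.quasiMeasurePreserving_snd.ae (ae_mem_cellNormalize ν hB))

end CellNormalize

section BlockApprox

variable {n : ℕ} {μ ν : Measure (En n)} [IsProbabilityMeasure μ] [IsProbabilityMeasure ν]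
  {γ : Measure (En n × En n)} {ℓ : ℝ}

theorem measurableSet_cube_prod (jk : (Fin n → ℤ) × (Fin n → ℤ)) (ℓ : ℝ) :
    MeasurableSet (cube jk.1 ℓ ×ˢ cube jk.2 ℓ) :=
  (measurableSet_cube _ _).prod (measurableSet_cube _ _)

theorem pairwise_disjoint_cube_prod (hℓ : 0 < ℓ) :
    Pairwise (Disjoint on fun jk : (Fin n → ℤ) × (Fin n → ℤ) => cube jk.1 ℓ ×ˢ cube jk.2 ℓ) := by
  rintro ⟨j, k⟩ ⟨j', k'⟩ hne
  rw [onFun, Set.disjoint_prod]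
  by_cases hj : j = j'
  · exact Or.inr (pairwise_disjoint_cube hℓ fun hk => hne (Prod.ext hj hk))
  · exact Or.inl (pairwise_disjoint_cube hℓ hj)

theorem iUnion_cube_prod (hℓ : 0 < ℓ) :
    ⋃ jk : (Fin n → ℤ) × (Fin n → ℤ), cube jk.1 ℓ ×ˢ cube jk.2 ℓ = univ := by
  rw [iUnion_prod (fun j => cube j ℓ) (fun k => cube k ℓ), iUnion_cube hℓ, univ_prod_univ]

theorem cellNormalize_prod_apply_cube_prod (hγ : IsCoupling μ ν γ)
    {jk : (Fin n → ℤ) × (Fin n → ℤ)}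
    (h0 : γ (cube jk.1 ℓ ×ˢ cube jk.2 ℓ) ≠ 0) :
    (cellNormalize μ (cube jk.1 ℓ)).prod (cellNormalize ν (cube jk.2 ℓ))
      (cube jk.1 ℓ ×ˢ cube jk.2 ℓ) = 1 := by
  have hμ : μ (cube jk.1 ℓ) ≠ 0 := fun h => h0 <|
    nonpos_iff_eq_zero.1 (h ▸ hγ.measure_prod_le_left (measurableSet_cube _ _) _)
  have hν : ν (cube jk.2 ℓ) ≠ 0 := fun h => h0 <|
    nonpos_iff_eq_zero.1 (h ▸ hγ.measure_prod_le_right _ (measurableSet_cube _ _))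
  rw [Measure.prod_prod, cellNormalize_apply_self μ hμ, cellNormalize_apply_self ν hν, one_mul]

theorem lintegral_blockApprox_le (hγ : IsCoupling μ ν γ) (hℓ : 0 < ℓ) {f g : En n × En n → ℝ≥0∞}
    (hg : Measurable g)
    (hfg : ∀ jk : (Fin n → ℤ) × (Fin n → ℤ), ∀ p ∈ cube jk.1 ℓ ×ˢ cube jk.2 ℓ,
      ∀ q ∈ cube jk.1 ℓ ×ˢ cube jk.2 ℓ, f p ≤ g q) :
    ∫⁻ p, f p ∂blockApprox μ ν γ ℓ ≤ ∫⁻ q, g q ∂γ :=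
  lintegral_sum_smul_le (measurableSet_cube_prod · ℓ) (pairwise_disjoint_cube_prod hℓ)
    (fun _ h0 => ⟨cellNormalize_prod_apply_cube_prod hγ h0,
      ae_mem_cellNormalize_prod μ ν (measurableSet_cube _ _) (measurableSet_cube _ _)⟩) hg hfg

theorem lintegral_le_lintegral_blockApprox (hγ : IsCoupling μ ν γ) (hℓ : 0 < ℓ)
    {f g : En n × En n → ℝ≥0∞} (hg : Measurable g)
    (hfg : ∀ jk : (Fin n → ℤ) × (Fin n → ℤ), ∀ p ∈ cube jk.1 ℓ ×ˢ cube jk.2 ℓ,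
      ∀ q ∈ cube jk.1 ℓ ×ˢ cube jk.2 ℓ, f p ≤ g q) :
    ∫⁻ p, f p ∂γ ≤ ∫⁻ q, g q ∂blockApprox μ ν γ ℓ :=
  lintegral_le_lintegral_sum_smul (measurableSet_cube_prod · ℓ) (pairwise_disjoint_cube_prod hℓ)
    (iUnion_cube_prod hℓ) (fun _ h0 => cellNormalize_prod_apply_cube_prod hγ h0) hg hfg

theorem isProbabilityMeasure_blockApprox (hγ : IsCoupling μ ν γ) (hℓ : 0 < ℓ) :
    IsProbabilityMeasure (blockApprox μ ν γ ℓ) := by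
  have := hγ.isProbabilityMeasure
  have hle := lintegral_blockApprox_le hγ hℓ measurable_const fun _ _ _ _ _ => le_refl (1 : ℝ≥0∞)
  have hge := lintegral_le_lintegral_blockApprox hγ hℓ measurable_const
    fun _ _ _ _ _ => le_refl (1 : ℝ≥0∞)
  simp only [lintegral_one, measure_univ] at hle hge
  exact ⟨le_antisymm hle hge⟩

end BlockApprox

section Cost

variable {n : ℕ} {μ ν : Measure (En n)} [IsProbabilityMeasure μ] [IsProbabilityMeasure ν]
  {γ : Measure (En n × En n)} {ℓ : ℝ}

theorem measurable_cost_add_sq (c : ℝ≥0∞) :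
    Measurable fun p : En n × En n => ((‖p.1 - p.2‖₊ : ℝ≥0∞) + c) ^ 2 :=
  ((measurable_fst.sub measurable_snd).nnnorm.coe_nnreal_ennreal.add_const c).pow_const 2

theorem cost_le_of_mem_cube_prod (hℓ : 0 ≤ ℓ) {j k : Fin n → ℤ} {p q : En n × En n}
    (hp : p ∈ cube j ℓ ×ˢ cube k ℓ) (hq : q ∈ cube j ℓ ×ˢ cube k ℓ) :
    (‖p.1 - p.2‖₊ : ℝ≥0∞) ^ 2 ≤ ((‖q.1 - q.2‖₊ : ℝ≥0∞) + ENNReal.ofReal (2 * (√n * ℓ))) ^ 2 := by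
  gcongr
  rw [← enorm_eq_nnnorm, ← enorm_eq_nnnorm, ← ofReal_norm, ← ofReal_norm,
    ← ENNReal.ofReal_add (norm_nonneg _) (by positivity)]
  exact ENNReal.ofReal_le_ofReal (norm_sub_le_of_mem_cube_prod hℓ hp hq)

theorem rpow_tCost_le_add {σ σ' : Measure (En n × En n)} {c : ℝ≥0∞} [IsProbabilityMeasure σ']
    (h : tCost σ ≤ ∫⁻ q, ((‖q.1 - q.2‖₊ : ℝ≥0∞) + c) ^ 2 ∂σ') :
    tCost σ ^ (2⁻¹ : ℝ) ≤ tCost σ' ^ (2⁻¹ : ℝ) + c := by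
  have hf : AEMeasurable (fun q : En n × En n => (‖q.1 - q.2‖₊ : ℝ≥0∞)) σ' :=
    (measurable_fst.sub measurable_snd).nnnorm.coe_nnreal_ennreal.aemeasurable
  calc tCost σ ^ (2⁻¹ : ℝ) ≤ (∫⁻ q, ((‖q.1 - q.2‖₊ : ℝ≥0∞) + c) ^ 2 ∂σ') ^ (2⁻¹ : ℝ) :=
        ENNReal.rpow_le_rpow h (by norm_num)
    _ ≤ tCost σ' ^ (2⁻¹ : ℝ) + c := by
        simpa [tCost] using lintegral_add_const_sq_rpow_le σ' hf c

theorem rpow_tCost_blockApprox_le (hγ : IsCoupling μ ν γ) (hℓ : 0 < ℓ) :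
    tCost (blockApprox μ ν γ ℓ) ^ (2⁻¹ : ℝ) ≤
      tCost γ ^ (2⁻¹ : ℝ) + ENNReal.ofReal (2 * (√n * ℓ)) :=
  have := hγ.isProbabilityMeasure
  rpow_tCost_le_add <| lintegral_blockApprox_le hγ hℓ (measurable_cost_add_sq _)
    fun _ _ hp _ hq => cost_le_of_mem_cube_prod hℓ.le hp hq

theorem rpow_tCost_le_blockApprox (hγ : IsCoupling μ ν γ) (hℓ : 0 < ℓ) :
    tCost γ ^ (2⁻¹ : ℝ) ≤
      tCost (blockApprox μ ν γ ℓ) ^ (2⁻¹ : ℝ) + ENNReal.ofReal (2 * (√n * ℓ)) :=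
  have := isProbabilityMeasure_blockApprox hγ hℓ
  rpow_tCost_le_add <| lintegral_le_lintegral_blockApprox hγ hℓ (measurable_cost_add_sq _)
    fun _ _ hp _ hq => cost_le_of_mem_cube_prod hℓ.le hp hq

end Cost

theorem stmt_9_general {n : ℕ} (μ ν : Measure (En n))
    [IsProbabilityMeasure μ] [IsProbabilityMeasure ν]
    (γ : Measure (En n × En n)) (hγ : IsCoupling μ ν γ) :
    Tendsto (fun ℓ : ℝ => tCost (blockApprox μ ν γ ℓ)) (𝓝[>] (0:ℝ)) (𝓝 (tCost γ)) := by
  have hc : Tendsto (fun ℓ : ℝ => ENNReal.ofReal (2 * (√n * ℓ))) (𝓝[>] 0) (𝓝 0) := by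
    have : Tendsto (fun ℓ : ℝ => 2 * (√n * ℓ)) (𝓝 0) (𝓝 0) := by
      simpa using ((continuous_const_mul (√n)).const_mul 2).tendsto 0
    simpa using (ENNReal.tendsto_ofReal this).mono_left nhdsWithin_le_nhds
  have hroot : Tendsto (fun ℓ => tCost (blockApprox μ ν γ ℓ) ^ (2⁻¹ : ℝ)) (𝓝[>] 0)
      (𝓝 (tCost γ ^ (2⁻¹ : ℝ))) :=
    ENNReal.tendsto_of_le_add_of_le_add hc
      (eventually_mem_nhdsWithin.mono fun _ hℓ => rpow_tCost_blockApprox_le hγ hℓ)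
      (eventually_mem_nhdsWithin.mono fun _ hℓ => rpow_tCost_le_blockApprox hγ hℓ)
  simpa only [comp_def, ENNReal.rpow_inv_rpow two_ne_zero] using
    ((ENNReal.continuous_rpow_const (y := 2)).tendsto _).comp hroot

/-- the transport cost of the block approximation converges to the transport
cost of `γ` as `ℓ → 0⁺`. -/
theorem stmt_9 {n : ℕ} (μ ν : Measure (En n))
    [IsProbabilityMeasure μ] [IsProbabilityMeasure ν]
    (hμM : M2 μ ≠ ∞) (hνM : M2 ν ≠ ∞)
    (γ : Measure (En n × En n)) (hγ : IsCoupling μ ν γ) :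
    Tendsto (fun ℓ : ℝ => tCost (blockApprox μ ν γ ℓ)) (𝓝[>] (0:ℝ)) (𝓝 (tCost γ)) :=
  stmt_9_general μ ν γ hγ
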